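/- Let Q be a seminormal quasi-crystal, u, v ∈ Q* with u ≈ v, and i ∈ I. Then wt(u) = wt(v), ε̈_i(u) = ε̈_i(v), and φ̈_i(u) = φ̈_i(v) (all computed in F^⊗(Q)); if ë_i(u) ∈ Q* then ë_i(v) ∈ Q* and ë_i(u) ≈ ë_i(v); and if f̈_i(u) ∈ Q* then f̈_i(v) ∈ Q* and f̈_i(u) ≈ f̈_i(v). Hence the quasi-crystal structure of F^⊗(Q) induces a quasi-crystal structure on the plactic monoid plac(Q) = Q*/≈. -/

import Mathlib

/-! ## Root system setting -/

/-- The data of a root system `Φ` in a Euclidean space `V`, together with a choice of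
simple roots `(α_i)_{i ∈ ι}` and a weight lattice `Λ`, with the integer-valued coroot
pairing `pair λ i = ⟨λ, α_i^∨⟩ = 2⟪λ, α_i⟫/⟪α_i, α_i⟫` on the weight lattice. -/
structure QCSetting (V : Type*) [NormedAddCommGroup V] [InnerProductSpace ℝ V]
    (ι : Type*) where
  Φ : Set V
  finite : Φ.Finite
  nonempty : Φ.Nonempty
  zero_not_mem : (0 : V) ∉ Φ
  reflect_mem : ∀ a ∈ Φ, ∀ b ∈ Φ, b - (2 * (inner ℝ b a : ℝ) / (inner ℝ a a : ℝ)) • a ∈ Φ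
  smul_root : ∀ a ∈ Φ, ∀ k : ℝ, k • a ∈ Φ → k = 1 ∨ k = -1
  simple : ι → V
  simple_mem : ∀ i, simple i ∈ Φ
  simple_indep : LinearIndependent ℝ simple
  Λ : AddSubgroup V
  lattice_spans : Submodule.span ℝ (Λ : Set V) = ⊤
  root_mem_lattice : ∀ a ∈ Φ, a ∈ Λ
  pair : Λ → ι → ℤ
  pair_spec : ∀ (v : Λ) (i : ι),
    (pair v i : ℝ) = 2 * (inner ℝ (v : V) (simple i) : ℝ) / (inner ℝ (simple i) (simple i) : ℝ)

variable {V : Type*} [NormedAddCommGroup V] [InnerProductSpace ℝ V] {ι : Type*}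

/-! ## Quasi-crystals -/

/-- The structure maps of a quasi-crystal of type `S` on an underlying set `Q`:
a weight map `wt` with values in the weight lattice, partial quasi-Kashiwara operators
`e i, f i : Q → Q ⊔ {⊥}` (realized as `Option`-valued maps, `none` playing the role
of `⊥`), and maps `ε i, φ i : Q → ℤ ∪ {+∞}` (realized as `WithTop ℤ`). -/
structure QC (S : QCSetting V ι) (Q : Type*) where
  wt : Q → S.Λ
  e : ι → Q → Option Q
  f : ι → Q → Option Q
  ε : ι → Q → WithTop ℤ
  φ : ι → Q → WithTop ℤ

/-- `k`-fold iteration of a partial map `g : Q → Option Q` starting at `x`. -/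
def optIter {Q : Type*} (g : Q → Option Q) (k : ℕ) (x : Q) : Option Q :=
  (fun o => o.bind g)^[k] (some x)

/-- The axioms of a seminormal quasi-crystal. -/
structure QC.IsSeminormal {S : QCSetting V ι} {Q : Type*} (𝒬 : QC S Q) : Prop where
  phi_eq : ∀ i x, 𝒬.φ i x = 𝒬.ε i x + ((S.pair (𝒬.wt x) i : ℤ) : WithTop ℤ)
  wt_e : ∀ i x y, 𝒬.e i x = some y → (𝒬.wt y : V) = (𝒬.wt x : V) + S.simple i
  wt_f : ∀ i x y, 𝒬.f i x = some y → (𝒬.wt y : V) = (𝒬.wt x : V) - S.simple i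
  e_iff_f : ∀ i x y, 𝒬.e i x = some y ↔ 𝒬.f i y = some x
  e_of_top : ∀ i x, 𝒬.ε i x = ⊤ → 𝒬.e i x = none
  f_of_top : ∀ i x, 𝒬.ε i x = ⊤ → 𝒬.f i x = none
  eps_spec : ∀ i x, 𝒬.ε i x ≠ ⊤ → ∃ n : ℕ, 𝒬.ε i x = ((n : ℤ) : WithTop ℤ) ∧
    IsGreatest {k : ℕ | (optIter (𝒬.e i) k x).isSome} n
  phi_spec : ∀ i x, 𝒬.ε i x ≠ ⊤ → ∃ n : ℕ, 𝒬.φ i x = ((n : ℤ) : WithTop ℤ) ∧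
    IsGreatest {k : ℕ | (optIter (𝒬.f i) k x).isSome} n

/-- A seminormal crystal is a seminormal quasi-crystal in which `ε i x ≠ +∞` always. -/
def QC.IsSeminormalCrystal {S : QCSetting V ι} {Q : Type*} (𝒬 : QC S Q) : Prop :=
  𝒬.IsSeminormal ∧ ∀ i x, 𝒬.ε i x ≠ ⊤

/-! ## Tensor product -/

/-- The tensor product of two quasi-crystals of the same type. -/
noncomputable def QC.tensor {S : QCSetting V ι} {Q Q' : Type*} (𝒬 : QC S Q) (𝒬' : QC S Q') :
    QC S (Q × Q') where
  wt p := 𝒬.wt p.1 + 𝒬'.wt p.2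
  ε i p := max (𝒬.ε i p.1) (𝒬'.ε i p.2 + ((-(S.pair (𝒬.wt p.1) i) : ℤ) : WithTop ℤ))
  φ i p := max (𝒬.φ i p.1 + ((S.pair (𝒬'.wt p.2) i : ℤ) : WithTop ℤ)) (𝒬'.φ i p.2)
  e i p := if 𝒬'.ε i p.2 ≤ 𝒬.φ i p.1
    then (𝒬.e i p.1).map (fun y => (y, p.2))
    else (𝒬'.e i p.2).map (fun y => (p.1, y))
  f i p := if 𝒬'.ε i p.2 < 𝒬.φ i p.1
    then (𝒬.f i p.1).map (fun y => (y, p.2))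
    else (𝒬'.f i p.2).map (fun y => (p.1, y))

/-! ## Quasi-tensor product -/

/-- The (inverse-free) quasi-tensor product of two quasi-crystals of the same type. -/
noncomputable def QC.qtensor {S : QCSetting V ι} {Q Q' : Type*} (𝒬 : QC S Q) (𝒬' : QC S Q') :
    QC S (Q × Q') where
  wt p := 𝒬.wt p.1 + 𝒬'.wt p.2
  ε i p := if 0 < 𝒬.φ i p.1 ∧ 0 < 𝒬'.ε i p.2 then ⊤
    else max (𝒬.ε i p.1) (𝒬'.ε i p.2 + ((-(S.pair (𝒬.wt p.1) i) : ℤ) : WithTop ℤ))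
  φ i p := if 0 < 𝒬.φ i p.1 ∧ 0 < 𝒬'.ε i p.2 then ⊤
    else max (𝒬.φ i p.1 + ((S.pair (𝒬'.wt p.2) i : ℤ) : WithTop ℤ)) (𝒬'.φ i p.2)
  e i p := if 0 < 𝒬.φ i p.1 ∧ 0 < 𝒬'.ε i p.2 then none
    else if 𝒬'.ε i p.2 ≤ 𝒬.φ i p.1 then (𝒬.e i p.1).map (fun y => (y, p.2))
    else (𝒬'.e i p.2).map (fun y => (p.1, y))
  f i p := if 0 < 𝒬.φ i p.1 ∧ 0 < 𝒬'.ε i p.2 then none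
    else if 𝒬'.ε i p.2 < 𝒬.φ i p.1 then (𝒬.f i p.1).map (fun y => (y, p.2))
    else (𝒬'.f i p.2).map (fun y => (p.1, y))

/-! ## Homomorphisms -/

/-- A quasi-crystal homomorphism `ψ : 𝒬 → 𝒬'`, i.e. a map `Q ⊔ {⊥} → Q' ⊔ {⊥}`
(realized on `Option`s, `none` playing the role of `⊥`) compatible with the structure
maps in the appropriate sense. -/
structure QCHom {S : QCSetting V ι} {Q Q' : Type*} (𝒬 : QC S Q) (𝒬' : QC S Q') where
  toFun : Option Q → Option Q'
  map_none : toFun none = none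
  wt_eq : ∀ x y, toFun (some x) = some y → 𝒬'.wt y = 𝒬.wt x
  eps_eq : ∀ i x y, toFun (some x) = some y → 𝒬'.ε i y = 𝒬.ε i x
  phi_eq : ∀ i x y, toFun (some x) = some y → 𝒬'.φ i y = 𝒬.φ i x
  comm_e : ∀ i x x' y y', 𝒬.e i x = some x' → toFun (some x) = some y →
    toFun (some x') = some y' → 𝒬'.e i y = some y'
  comm_f : ∀ i x x' y y', 𝒬.f i x = some x' → toFun (some x) = some y →
    toFun (some x') = some y' → 𝒬'.f i y = some y'

/-! ## The free `⊗`-quasi-crystal monoid -/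

/-- Weight of a word: the sum of the weights of its letters. -/
def freeWt {S : QCSetting V ι} {Q : Type*} (𝒬 : QC S Q) : List Q → S.Λ
  | [] => 0
  | x :: w => 𝒬.wt x + freeWt 𝒬 w

/-- The map `ε̈_i` of the free `⊗`-quasi-crystal monoid. -/
def freeEps {S : QCSetting V ι} {Q : Type*} (𝒬 : QC S Q) (i : ι) : List Q → WithTop ℤ
  | [] => 0
  | x :: w => max (𝒬.ε i x) (freeEps 𝒬 i w + ((-(S.pair (𝒬.wt x) i) : ℤ) : WithTop ℤ))

/-- The map `φ̈_i` of the free `⊗`-quasi-crystal monoid. -/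
def freePhi {S : QCSetting V ι} {Q : Type*} (𝒬 : QC S Q) (i : ι) : List Q → WithTop ℤ
  | [] => 0
  | x :: w => max (𝒬.φ i x + ((S.pair (freeWt 𝒬 w) i : ℤ) : WithTop ℤ)) (freePhi 𝒬 i w)

/-- The operator `ë_i` of the free `⊗`-quasi-crystal monoid. -/
noncomputable def freeE {S : QCSetting V ι} {Q : Type*} (𝒬 : QC S Q) (i : ι) : List Q → Option (List Q)
  | [] => none
  | x :: w => if freeEps 𝒬 i w ≤ 𝒬.φ i x
      then (𝒬.e i x).map (· :: w)
      else (freeE 𝒬 i w).map (x :: ·)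

/-- The operator `f̈_i` of the free `⊗`-quasi-crystal monoid. -/
noncomputable def freeF {S : QCSetting V ι} {Q : Type*} (𝒬 : QC S Q) (i : ι) : List Q → Option (List Q)
  | [] => none
  | x :: w => if freeEps 𝒬 i w < 𝒬.φ i x
      then (𝒬.f i x).map (· :: w)
      else (freeF 𝒬 i w).map (x :: ·)

/-- The quasi-crystal structure of the free `⊗`-quasi-crystal monoid `F^⊗(𝒬)`
on the free monoid `Q*`. -/
noncomputable def freeTensorQC {S : QCSetting V ι} {Q : Type*} (𝒬 : QC S Q) : QC S (FreeMonoid Q) where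
  wt w := freeWt 𝒬 (FreeMonoid.toList w)
  ε i w := freeEps 𝒬 i (FreeMonoid.toList w)
  φ i w := freePhi 𝒬 i (FreeMonoid.toList w)
  e i w := (freeE 𝒬 i (FreeMonoid.toList w)).map (fun l => FreeMonoid.ofList l)
  f i w := (freeF 𝒬 i (FreeMonoid.toList w)).map (fun l => FreeMonoid.ofList l)

/-! ## The free `⊗̈`-quasi-crystal monoid -/

/-- The map `ε̈_i` of the free `⊗̈`-quasi-crystal monoid. -/
noncomputable def qfreeEps {S : QCSetting V ι} {Q : Type*} (𝒬 : QC S Q) (i : ι) : List Q → WithTop ℤ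
  | [] => 0
  | x :: w => if 0 < 𝒬.φ i x ∧ 0 < qfreeEps 𝒬 i w then ⊤
      else max (𝒬.ε i x) (qfreeEps 𝒬 i w + ((-(S.pair (𝒬.wt x) i) : ℤ) : WithTop ℤ))

/-- The map `φ̈_i` of the free `⊗̈`-quasi-crystal monoid. -/
noncomputable def qfreePhi {S : QCSetting V ι} {Q : Type*} (𝒬 : QC S Q) (i : ι) : List Q → WithTop ℤ
  | [] => 0
  | x :: w => if 0 < 𝒬.φ i x ∧ 0 < qfreeEps 𝒬 i w then ⊤
      else max (𝒬.φ i x + ((S.pair (freeWt 𝒬 w) i : ℤ) : WithTop ℤ)) (qfreePhi 𝒬 i w)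

/-- The operator `ë_i` of the free `⊗̈`-quasi-crystal monoid. -/
noncomputable def qfreeE {S : QCSetting V ι} {Q : Type*} (𝒬 : QC S Q) (i : ι) : List Q → Option (List Q)
  | [] => none
  | x :: w => if 0 < 𝒬.φ i x ∧ 0 < qfreeEps 𝒬 i w then none
      else if qfreeEps 𝒬 i w ≤ 𝒬.φ i x then (𝒬.e i x).map (· :: w)
      else (qfreeE 𝒬 i w).map (x :: ·)

/-- The operator `f̈_i` of the free `⊗̈`-quasi-crystal monoid. -/
noncomputable def qfreeF {S : QCSetting V ι} {Q : Type*} (𝒬 : QC S Q) (i : ι) : List Q → Option (List Q)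
  | [] => none
  | x :: w => if 0 < 𝒬.φ i x ∧ 0 < qfreeEps 𝒬 i w then none
      else if qfreeEps 𝒬 i w < 𝒬.φ i x then (𝒬.f i x).map (· :: w)
      else (qfreeF 𝒬 i w).map (x :: ·)

/-- The quasi-crystal structure of the free `⊗̈`-quasi-crystal monoid `F^⊗̈(𝒬)`
on the free monoid `Q*`. -/
noncomputable def freeQTensorQC {S : QCSetting V ι} {Q : Type*} (𝒬 : QC S Q) : QC S (FreeMonoid Q) where
  wt w := freeWt 𝒬 (FreeMonoid.toList w)
  ε i w := qfreeEps 𝒬 i (FreeMonoid.toList w)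
  φ i w := qfreePhi 𝒬 i (FreeMonoid.toList w)
  e i w := (qfreeE 𝒬 i (FreeMonoid.toList w)).map (fun l => FreeMonoid.ofList l)
  f i w := (qfreeF 𝒬 i (FreeMonoid.toList w)).map (fun l => FreeMonoid.ofList l)

/-! ## Connected components, plactic and hypoplactic congruences -/

/-- Two elements are connected in the quasi-crystal graph if they are related by the
reflexive-symmetric-transitive closure of the edge relation given by the
quasi-Kashiwara operators. -/
def QC.conn {S : QCSetting V ι} {Q : Type*} (𝒬 : QC S Q) : Q → Q → Prop :=
  Relation.EqvGen (fun x y => ∃ i, 𝒬.f i x = some y ∨ 𝒬.f i y = some x ∨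
    𝒬.e i x = some y ∨ 𝒬.e i y = some x)

/-- The connected component `𝒬(x)` of a quasi-crystal `𝒬` containing `x`, as a
quasi-crystal on the subtype of elements connected with `x`. -/
def QC.compQC {S : QCSetting V ι} {Q : Type*} (𝒬 : QC S Q) (x : Q) :
    QC S {y : Q // 𝒬.conn x y} where
  wt y := 𝒬.wt y.1
  ε i y := 𝒬.ε i y.1
  φ i y := 𝒬.φ i y.1
  e i y := (𝒬.e i y.1).pmap (fun z hz => (⟨z, hz⟩ : {y : Q // 𝒬.conn x y}))
    (fun z hz => Relation.EqvGen.trans _ _ _ y.2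
      (Relation.EqvGen.rel _ _ ⟨i, Or.inr (Or.inr (Or.inl hz))⟩))
  f i y := (𝒬.f i y.1).pmap (fun z hz => (⟨z, hz⟩ : {y : Q // 𝒬.conn x y}))
    (fun z hz => Relation.EqvGen.trans _ _ _ y.2
      (Relation.EqvGen.rel _ _ ⟨i, Or.inl hz⟩))

/-- The plactic congruence: `u ≈ v` iff there is a quasi-crystal isomorphism between the
connected components of `u` and `v` in `F^⊗(𝒬)` mapping `u` to `v`. -/
def placticRel {S : QCSetting V ι} {Q : Type*} (𝒬 : QC S Q)
    (u v : FreeMonoid Q) : Prop :=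
  ∃ ψ : QCHom ((freeTensorQC 𝒬).compQC u) ((freeTensorQC 𝒬).compQC v),
    Function.Bijective ψ.toFun ∧
    ψ.toFun (some ⟨u, Relation.EqvGen.refl u⟩) = some ⟨v, Relation.EqvGen.refl v⟩

/-- The hypoplactic congruence: `u ∼̈ v` iff there is a quasi-crystal isomorphism between
the connected components of `u` and `v` in `F^⊗̈(𝒬)` mapping `u` to `v`. -/
def hypoRel {S : QCSetting V ι} {Q : Type*} (𝒬 : QC S Q)
    (u v : FreeMonoid Q) : Prop :=
  ∃ ψ : QCHom ((freeQTensorQC 𝒬).compQC u) ((freeQTensorQC 𝒬).compQC v),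
    Function.Bijective ψ.toFun ∧
    ψ.toFun (some ⟨u, Relation.EqvGen.refl u⟩) = some ⟨v, Relation.EqvGen.refl v⟩

/-! ## Quasi-crystal monoids -/

/-- A monoid is equidivisible if whenever `x₁y₁ = x₂y₂` one of the factorizations
refines the other. -/
def Equidivisible (M : Type*) [Monoid M] : Prop :=
  ∀ x₁ x₂ y₁ y₂ : M, x₁ * y₁ = x₂ * y₂ →
    ∃ z : M, (x₂ = x₁ * z ∧ y₁ = z * y₂) ∨ (x₁ = x₂ * z ∧ y₂ = z * y₁)

/-- A `⊗`-quasi-crystal monoid: a seminormal quasi-crystal structure on a monoid whose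
structure maps interact with the multiplication by the tensor-product rules. -/
structure IsTensorQCMon {S : QCSetting V ι} {M : Type*} [Monoid M] (𝒬 : QC S M) : Prop where
  seminormal : 𝒬.IsSeminormal
  wt_mul : ∀ x y, 𝒬.wt (x * y) = 𝒬.wt x + 𝒬.wt y
  eps_mul : ∀ i x y, 𝒬.ε i (x * y) =
    max (𝒬.ε i x) (𝒬.ε i y + ((-(S.pair (𝒬.wt x) i) : ℤ) : WithTop ℤ))
  phi_mul : ∀ i x y, 𝒬.φ i (x * y) =
    max (𝒬.φ i x + ((S.pair (𝒬.wt y) i : ℤ) : WithTop ℤ)) (𝒬.φ i y)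
  e_mul : ∀ i x y, 𝒬.e i (x * y) =
    if 𝒬.ε i y ≤ 𝒬.φ i x then (𝒬.e i x).map (· * y) else (𝒬.e i y).map (x * ·)
  f_mul : ∀ i x y, 𝒬.f i (x * y) =
    if 𝒬.ε i y < 𝒬.φ i x then (𝒬.f i x).map (· * y) else (𝒬.f i y).map (x * ·)

/-- A `⊗̈`-quasi-crystal monoid: a seminormal quasi-crystal structure on a monoid such
that `x ⊗̈ y ↦ x·y` induces a quasi-crystal homomorphism `M ⊗̈ M → M`. -/
def IsQTensorQCMon {S : QCSetting V ι} {M : Type*} [Monoid M] (𝒬 : QC S M) : Prop :=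
  𝒬.IsSeminormal ∧
  ∃ ψ : QCHom (𝒬.qtensor 𝒬) 𝒬, ψ.toFun = Option.map (fun p => p.1 * p.2)

/-! ## The bicyclic monoid with zero `B₀` and the monoid `Z₀` -/

/-- The bicyclic monoid `⟨−, + | (+)(−) = ε⟩`: elements are normal forms `(−)^a(+)^b`. -/
structure Bic where
  neg : ℕ
  pos : ℕ
deriving DecidableEq

instance : Mul Bic :=
  ⟨fun x y => ⟨x.neg + (y.neg - x.pos), y.pos + (x.pos - y.neg)⟩⟩

theorem Bic.mul_def (x y : Bic) :
    x * y = ⟨x.neg + (y.neg - x.pos), y.pos + (x.pos - y.neg)⟩ := rfl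

instance : One Bic := ⟨⟨0, 0⟩⟩

theorem Bic.one_def : (1 : Bic) = ⟨0, 0⟩ := rfl

instance : Monoid Bic where
  mul_assoc x y z := by
    simp only [Bic.mul_def, Bic.mk.injEq]
    omega
  one_mul x := by
    simp only [Bic.one_def, Bic.mul_def]
    cases x
    simp only [Bic.mk.injEq]
    omega
  mul_one x := by
    simp only [Bic.one_def, Bic.mul_def]
    cases x
    simp only [Bic.mk.injEq]
    omega

/-- The bicyclic monoid with a zero element adjoined,
`B₀ = ⟨0, −, + | (+)(−) = ε, 0x = x0 = 0⟩`. -/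
abbrev B0 : Type := WithZero Bic

/-- The monoid `Z₀ = ⟨0, −, + | (+)(−) = 0, 0x = x0 = 0⟩`: the nonzero elements are the
normal forms `(−)^a(+)^b`. -/
inductive Z0 : Type
  | zero : Z0
  | word : ℕ → ℕ → Z0
deriving DecidableEq

instance : Mul Z0 :=
  ⟨fun x y => match x, y with
    | Z0.zero, _ => Z0.zero
    | _, Z0.zero => Z0.zero
    | Z0.word a b, Z0.word c d =>
        if 0 < b ∧ 0 < c then Z0.zero else Z0.word (a + c) (b + d)⟩

instance : One Z0 := ⟨Z0.word 0 0⟩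

instance : Zero Z0 := ⟨Z0.zero⟩

theorem Z0.one_def : (1 : Z0) = Z0.word 0 0 := rfl
theorem Z0.zero_def : (0 : Z0) = Z0.zero := rfl
theorem Z0.zero_mul' (x : Z0) : Z0.zero * x = Z0.zero := by cases x <;> rfl
theorem Z0.mul_zero' (x : Z0) : x * Z0.zero = Z0.zero := by cases x <;> rfl
theorem Z0.word_mul_word (a b c d : ℕ) :
    Z0.word a b * Z0.word c d =
      if 0 < b ∧ 0 < c then Z0.zero else Z0.word (a + c) (b + d) := rfl

instance : MonoidWithZero Z0 where
  mul_assoc x y z := by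
    cases x <;> cases y <;> cases z <;>
      simp only [Z0.zero_mul', Z0.mul_zero', Z0.word_mul_word]
    · split_ifs <;> simp_all [Z0.zero_mul', Z0.mul_zero', Z0.word_mul_word] <;>
        split_ifs <;> simp_all <;> omega
  one_mul x := by
    cases x
    · rfl
    · simp [Z0.one_def, Z0.word_mul_word]
  mul_one x := by
    cases x
    · rfl
    · simp [Z0.one_def, Z0.word_mul_word]
  zero_mul x := by cases x <;> rfl
  mul_zero x := by cases x <;> rfl

/-! ## Signature maps -/

/-- The `i`-signature map for the tensor product `⊗`:
`sgn_i^⊗(w) = 0` if `ε̈_i(w) = +∞`, and `(−)^{ε̈_i(w)}(+)^{φ̈_i(w)}` otherwise. -/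
noncomputable def tsgn {V : Type*} [NormedAddCommGroup V] [InnerProductSpace ℝ V] {ι : Type*}
    {S : QCSetting V ι} {Q : Type*} (𝒬 : QC S Q) (i : ι) (w : FreeMonoid Q) : B0 :=
  if freeEps 𝒬 i (FreeMonoid.toList w) = ⊤ then 0
  else ↑(Bic.mk (WithTop.untopD 0 (freeEps 𝒬 i (FreeMonoid.toList w))).toNat
      (WithTop.untopD 0 (freePhi 𝒬 i (FreeMonoid.toList w))).toNat)

/-- The `i`-signature map for the quasi-tensor product `⊗̈`:
`sgn_i^⊗̈(w) = 0` if `ε̈_i(w) = +∞`, and `(−)^{ε̈_i(w)}(+)^{φ̈_i(w)}` otherwise. -/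
noncomputable def qsgn {V : Type*} [NormedAddCommGroup V] [InnerProductSpace ℝ V] {ι : Type*}
    {S : QCSetting V ι} {Q : Type*} (𝒬 : QC S Q) (i : ι) (w : FreeMonoid Q) : Z0 :=
  if qfreeEps 𝒬 i (FreeMonoid.toList w) = ⊤ then 0
  else Z0.word (WithTop.untopD 0 (qfreeEps 𝒬 i (FreeMonoid.toList w))).toNat
      (WithTop.untopD 0 (qfreePhi 𝒬 i (FreeMonoid.toList w))).toNat

/-! A pointed isomorphism `ψ` of connected components preserves the weight and `ε̈_i`, `φ̈_i`
at the base point. If `ë_i u = u'`, then `u'` lies in the component of `u`, so `ψ(u')` is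
defined and equals `ë_i v`; and `ψ`, re-based at `u'` and `ψ(u')`, is again a pointed
isomorphism of components. The same holds for `f̈_i`. -/

theorem Option.pmap_subtype_mk_eq_some_iff {α : Type*} {p : α → Prop} {o : Option α}
    {H : ∀ a, o = some a → p a} {y : Subtype p} :
    o.pmap Subtype.mk H = some y ↔ o = some y.1 := by
  cases o <;> simp [Option.pmap, Subtype.ext_iff, eq_comm]

namespace QCHom

variable {S : QCSetting V ι} {Q₁ Q₂ Q₃ : Type*} {𝒬₁ : QC S Q₁} {𝒬₂ : QC S Q₂} {𝒬₃ : QC S Q₃}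

theorem exists_eq_some_of_apply_eq_some (ψ : QCHom 𝒬₁ 𝒬₂) {o : Option Q₁} {y : Q₂}
    (h : ψ.toFun o = some y) : ∃ x, o = some x ∧ ψ.toFun (some x) = some y := by
  cases o with
  | none => simp [ψ.map_none] at h
  | some x => exact ⟨x, rfl, h⟩

def comp (χ : QCHom 𝒬₂ 𝒬₃) (ψ : QCHom 𝒬₁ 𝒬₂) : QCHom 𝒬₁ 𝒬₃ where
  toFun := χ.toFun ∘ ψ.toFun
  map_none := by simp [ψ.map_none, χ.map_none]
  wt_eq x z hxz := by
    obtain ⟨y, hxy, hyz⟩ := χ.exists_eq_some_of_apply_eq_some hxz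
    rw [χ.wt_eq y z hyz, ψ.wt_eq x y hxy]
  eps_eq i x z hxz := by
    obtain ⟨y, hxy, hyz⟩ := χ.exists_eq_some_of_apply_eq_some hxz
    rw [χ.eps_eq i y z hyz, ψ.eps_eq i x y hxy]
  phi_eq i x z hxz := by
    obtain ⟨y, hxy, hyz⟩ := χ.exists_eq_some_of_apply_eq_some hxz
    rw [χ.phi_eq i y z hyz, ψ.phi_eq i x y hxy]
  comm_e i x x' z z' he hxz hxz' := by
    obtain ⟨y, hxy, hyz⟩ := χ.exists_eq_some_of_apply_eq_some hxz
    obtain ⟨y', hxy', hyz'⟩ := χ.exists_eq_some_of_apply_eq_some hxz'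
    exact χ.comm_e i y y' z z' (ψ.comm_e i x x' y y' he hxy hxy') hyz hyz'
  comm_f i x x' z z' hf hxz hxz' := by
    obtain ⟨y, hxy, hyz⟩ := χ.exists_eq_some_of_apply_eq_some hxz
    obtain ⟨y', hxy', hyz'⟩ := χ.exists_eq_some_of_apply_eq_some hxz'
    exact χ.comm_f i y y' z z' (ψ.comm_f i x x' y y' hf hxy hxy') hyz hyz'

theorem comp_toFun (χ : QCHom 𝒬₂ 𝒬₃) (ψ : QCHom 𝒬₁ 𝒬₂) :
    (χ.comp ψ).toFun = χ.toFun ∘ ψ.toFun := rfl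

end QCHom

namespace QC

variable {S : QCSetting V ι} {Q : Type*} {𝒬 : QC S Q}

theorem conn_equivalence (𝒬 : QC S Q) : Equivalence 𝒬.conn :=
  Relation.EqvGen.is_equivalence _

theorem compQC_e_eq_some_iff {u : Q} {i : ι} {x y : {z // 𝒬.conn u z}} :
    (𝒬.compQC u).e i x = some y ↔ 𝒬.e i x.1 = some y.1 :=
  Option.pmap_subtype_mk_eq_some_iff

theorem compQC_f_eq_some_iff {u : Q} {i : ι} {x y : {z // 𝒬.conn u z}} :
    (𝒬.compQC u).f i x = some y ↔ 𝒬.f i x.1 = some y.1 :=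
  Option.pmap_subtype_mk_eq_some_iff

def compEquiv {u u' : Q} (h : 𝒬.conn u u') : {y // 𝒬.conn u y} ≃ {y // 𝒬.conn u' y} :=
  Equiv.subtypeEquivRight fun _ =>
    ⟨(𝒬.conn_equivalence.trans (𝒬.conn_equivalence.symm h) ·),
      (𝒬.conn_equivalence.trans h ·)⟩

def compRebase {u u' : Q} (h : 𝒬.conn u u') : QCHom (𝒬.compQC u) (𝒬.compQC u') where
  toFun := Equiv.optionCongr (compEquiv h)
  map_none := rfl
  wt_eq _ _ hxy := by cases Option.some.inj hxy; rfl
  eps_eq _ _ _ hxy := by cases Option.some.inj hxy; rfl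
  phi_eq _ _ _ hxy := by cases Option.some.inj hxy; rfl
  comm_e _ _ _ _ _ he hxy hxy' := by
    cases Option.some.inj hxy; cases Option.some.inj hxy'
    exact compQC_e_eq_some_iff.mpr (compQC_e_eq_some_iff (u := u).mp he)
  comm_f _ _ _ _ _ hf hxy hxy' := by
    cases Option.some.inj hxy; cases Option.some.inj hxy'
    exact compQC_f_eq_some_iff.mpr (compQC_f_eq_some_iff (u := u).mp hf)

/-- `placticRel 𝒬` is `(freeTensorQC 𝒬).CompIso` and `hypoRel 𝒬` is `(freeQTensorQC 𝒬).CompIso`. -/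
def CompIso (𝒬 : QC S Q) (u v : Q) : Prop :=
  ∃ ψ : QCHom (𝒬.compQC u) (𝒬.compQC v), Function.Bijective ψ.toFun ∧
    ψ.toFun (some ⟨u, Relation.EqvGen.refl u⟩) = some ⟨v, Relation.EqvGen.refl v⟩

namespace CompIso

variable {u v : Q}

theorem wt_eq (h : 𝒬.CompIso u v) : 𝒬.wt u = 𝒬.wt v := by
  obtain ⟨ψ, -, hψ⟩ := h
  exact (ψ.wt_eq _ _ hψ).symm

theorem ε_eq (h : 𝒬.CompIso u v) (i : ι) : 𝒬.ε i u = 𝒬.ε i v := by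
  obtain ⟨ψ, -, hψ⟩ := h
  exact (ψ.eps_eq i _ _ hψ).symm

theorem φ_eq (h : 𝒬.CompIso u v) (i : ι) : 𝒬.φ i u = 𝒬.φ i v := by
  obtain ⟨ψ, -, hψ⟩ := h
  exact (ψ.phi_eq i _ _ hψ).symm

theorem of_apply_eq_some {ψ : QCHom (𝒬.compQC u) (𝒬.compQC v)} (hψ : Function.Bijective ψ.toFun)
    {x : {y // 𝒬.conn u y}} {y : {z // 𝒬.conn v z}} (hxy : ψ.toFun (some x) = some y) :
    𝒬.CompIso x.1 y.1 := by
  refine ⟨(compRebase y.2).comp (ψ.comp (compRebase (𝒬.conn_equivalence.symm x.2))), ?_, ?_⟩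
  · exact (Equiv.bijective _).comp (hψ.comp (Equiv.bijective _))
  · simp only [QCHom.comp_toFun, Function.comp_apply]
    exact congrArg (Option.map _) hxy

theorem exists_apply_eq_some {ψ : QCHom (𝒬.compQC u) (𝒬.compQC v)}
    (hψ : Function.Bijective ψ.toFun) (x : {y // 𝒬.conn u y}) :
    ∃ y, ψ.toFun (some x) = some y :=
  Option.ne_none_iff_exists'.mp fun h => Option.some_ne_none x (hψ.1 (h.trans ψ.map_none.symm))

theorem exists_e_eq_some (h : 𝒬.CompIso u v) {i : ι} {u' : Q} (hu' : 𝒬.e i u = some u') :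
    ∃ v', 𝒬.e i v = some v' ∧ 𝒬.CompIso u' v' := by
  obtain ⟨ψ, hψ, hψu⟩ := h
  have hconn : 𝒬.conn u u' := .rel _ _ ⟨i, .inr (.inr (.inl hu'))⟩
  obtain ⟨y, hy⟩ := exists_apply_eq_some hψ ⟨u', hconn⟩
  have he := ψ.comm_e i _ _ _ _ (compQC_e_eq_some_iff.mpr hu') hψu hy
  exact ⟨y.1, compQC_e_eq_some_iff.mp he, of_apply_eq_some hψ hy⟩

theorem exists_f_eq_some (h : 𝒬.CompIso u v) {i : ι} {u' : Q} (hu' : 𝒬.f i u = some u') :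
    ∃ v', 𝒬.f i v = some v' ∧ 𝒬.CompIso u' v' := by
  obtain ⟨ψ, hψ, hψu⟩ := h
  have hconn : 𝒬.conn u u' := .rel _ _ ⟨i, .inl hu'⟩
  obtain ⟨y, hy⟩ := exists_apply_eq_some hψ ⟨u', hconn⟩
  have hf := ψ.comm_f i _ _ _ _ (compQC_f_eq_some_iff.mpr hu') hψu hy
  exact ⟨y.1, compQC_f_eq_some_iff.mp hf, of_apply_eq_some hψ hy⟩

end CompIso

end QC

theorem placticRel_compatible_general {V : Type*} [NormedAddCommGroup V]
    [InnerProductSpace ℝ V] {ι : Type*} {S : QCSetting V ι} {Q : Type*}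
    (𝒬 : QC S Q)
    (u v : FreeMonoid Q) (huv : placticRel 𝒬 u v) (i : ι) :
    (freeTensorQC 𝒬).wt u = (freeTensorQC 𝒬).wt v ∧
    (freeTensorQC 𝒬).ε i u = (freeTensorQC 𝒬).ε i v ∧
    (freeTensorQC 𝒬).φ i u = (freeTensorQC 𝒬).φ i v ∧
    (∀ u' : FreeMonoid Q, (freeTensorQC 𝒬).e i u = some u' →
      ∃ v' : FreeMonoid Q, (freeTensorQC 𝒬).e i v = some v' ∧ placticRel 𝒬 u' v') ∧
    (∀ u' : FreeMonoid Q, (freeTensorQC 𝒬).f i u = some u' →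
      ∃ v' : FreeMonoid Q, (freeTensorQC 𝒬).f i v = some v' ∧ placticRel 𝒬 u' v') := by
  exact ⟨QC.CompIso.wt_eq huv, QC.CompIso.ε_eq huv i, QC.CompIso.φ_eq huv i,
    fun _ => QC.CompIso.exists_e_eq_some huv, fun _ => QC.CompIso.exists_f_eq_some huv⟩

/-- If `u ≈ v` then `wt(u) = wt(v)`, `ε̈_i(u) = ε̈_i(v)`,
`φ̈_i(u) = φ̈_i(v)`, and the quasi-Kashiwara operators transfer across `≈`;
hence the quasi-crystal structure of `F^⊗(Q)` induces one on `plac(Q) = Q*/≈`. -/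
theorem placticRel_compatible {V : Type*} [NormedAddCommGroup V]
    [InnerProductSpace ℝ V] {ι : Type*} {S : QCSetting V ι} {Q : Type*}
    (𝒬 : QC S Q) (h : 𝒬.IsSeminormal)
    (u v : FreeMonoid Q) (huv : placticRel 𝒬 u v) (i : ι) :
    (freeTensorQC 𝒬).wt u = (freeTensorQC 𝒬).wt v ∧
    (freeTensorQC 𝒬).ε i u = (freeTensorQC 𝒬).ε i v ∧
    (freeTensorQC 𝒬).φ i u = (freeTensorQC 𝒬).φ i v ∧
    (∀ u' : FreeMonoid Q, (freeTensorQC 𝒬).e i u = some u' →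
      ∃ v' : FreeMonoid Q, (freeTensorQC 𝒬).e i v = some v' ∧ placticRel 𝒬 u' v') ∧
    (∀ u' : FreeMonoid Q, (freeTensorQC 𝒬).f i u = some u' →
      ∃ v' : FreeMonoid Q, (freeTensorQC 𝒬).f i v = some v' ∧ placticRel 𝒬 u' v') :=
  placticRel_compatible_general 𝒬 u v huv i
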